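/- Let z ∈ ℂ with z ≠ 0, let E ∈ ℂ, and let u = (u_1,…,u_n) ∈ (ℂ^m)^n be a nonzero vector satisfying H(z)·u = E·u. Then the vector w = (u_1, z⁻¹·u_n) ∈ ℂ^{2m} is nonzero and satisfies T(E)·w = z·w; in particular z is an eigenvalue of T(E). -/

import Mathlib

open Matrix

noncomputable def tstep {m : ℕ} (A B C : Matrix (Fin m) (Fin m) ℂ) (E : ℂ) :
    Matrix (Fin m ⊕ Fin m) (Fin m ⊕ Fin m) ℂ :=
  Matrix.fromBlocks (B⁻¹ * (E • 1 - A)) (-(B⁻¹ * C)) 1 0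

/-- The transfer matrix `T(E) = t_n(E) ⋯ t_1(E)` (0-indexed: `t_{n-1} ⋯ t_0`). -/
noncomputable def transfer {n m : ℕ} (A B C : Fin n → Matrix (Fin m) (Fin m) ℂ) (E : ℂ) :
    Matrix (Fin m ⊕ Fin m) (Fin m ⊕ Fin m) ℂ :=
  ((List.ofFn fun k : Fin n => tstep (A k) (B k) (C k) E).reverse).prod

/-- The block matrix `H(z)` with Bloch-type boundary conditions:
diagonal blocks `A_k`, upper blocks `B_k`, lower blocks `C_k`,
corner blocks `z⁻¹ C_1` (top-right) and `z B_n` (bottom-left). -/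
noncomputable def Hmat {n m : ℕ} (A B C : Fin n → Matrix (Fin m) (Fin m) ℂ) (z : ℂ) :
    Matrix (Fin n × Fin m) (Fin n × Fin m) ℂ :=
  fun p q =>
    (if p.1 = q.1 then A p.1 p.2 q.2 else 0)
    + (if (p.1 : ℕ) + 1 = (q.1 : ℕ) then B p.1 p.2 q.2 else 0)
    + (if (q.1 : ℕ) + 1 = (p.1 : ℕ) then C p.1 p.2 q.2 else 0)
    + (if (p.1 : ℕ) = 0 ∧ (q.1 : ℕ) = n - 1 then z⁻¹ * C p.1 p.2 q.2 else 0)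
    + (if (p.1 : ℕ) = n - 1 ∧ (q.1 : ℕ) = 0 then z * B p.1 p.2 q.2 else 0)

/-!
The rows of `H(z) u = E u` are the three-term recurrence
`A_k u_k + B_k u_{k+1} + C_k u_{k-1} = E u_k` for the sequence `u` extended by `u_0 = z⁻¹ u_n` and
`u_{n+1} = z u_1`: the corner blocks of `H(z)` are exactly these two boundary values. Since `B_k` is
invertible, `t_k(E)` maps `(u_k, u_{k-1})` to `(u_{k+1}, u_k)`, so `T(E)` maps `(u_1, u_0)` to
`(u_{n+1}, u_n) = z (u_1, u_0)`; and if `(u_1, u_0)` vanished, the same recurrence would force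
`u = 0`.
-/

theorem tstep_mulVec_eq {m : ℕ} {A B C : Matrix (Fin m) (Fin m) ℂ} {E : ℂ} {x x' y : Fin m → ℂ}
    (hB : IsUnit B) (h : A *ᵥ x + B *ᵥ x' + C *ᵥ y = E • x) :
    tstep A B C E *ᵥ Sum.elim x y = Sum.elim x' x := by
  have hBx' : B *ᵥ x' = (E • 1 - A) *ᵥ x - C *ᵥ y := by
    rw [sub_mulVec, smul_mulVec, one_mulVec, ← h]; abel
  have hx' : (B⁻¹ * (E • 1 - A)) *ᵥ x + (-(B⁻¹ * C)) *ᵥ y = x' := by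
    rw [neg_mulVec, ← mulVec_mulVec, ← mulVec_mulVec, ← sub_eq_add_neg, ← mulVec_sub, ← hBx',
      mulVec_mulVec, nonsing_inv_mul _ ((isUnit_iff_isUnit_det B).mp hB), one_mulVec]
  rw [tstep, fromBlocks_mulVec, Sum.elim_comp_inl, Sum.elim_comp_inr, hx', one_mulVec,
    zero_mulVec, add_zero]

section MatrixChain

variable {ι R : Type*} [Fintype ι] [Semiring R] {n : ℕ} (M : Fin n → Matrix ι ι R)
  (s : ℕ → ι → R)

theorem List.prod_reverse_ofFn_mulVec [DecidableEq ι] (h : ∀ k : Fin n, M k *ᵥ s k = s (k + 1)) :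
    (List.ofFn M).reverse.prod *ᵥ s 0 = s n := by
  induction n generalizing s with
  | zero => simp
  | succ n ih =>
    rw [List.ofFn_succ, List.reverse_cons, List.prod_append, List.prod_singleton,
      ← mulVec_mulVec, show s 0 = s (0 : Fin (n + 1)) from rfl, h 0]
    exact ih (fun k => M k.succ) (fun j => s (j + 1)) fun k => h k.succ

theorem eq_zero_of_mulVec_eq_succ (h : ∀ k : Fin n, M k *ᵥ s k = s (k + 1)) (h0 : s 0 = 0) :
    ∀ j ≤ n, s j = 0 := by
  intro j hj
  induction j with
  | zero => exact h0
  | succ j ih => rw [← h ⟨j, hj⟩, ih (by omega), mulVec_zero]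

end MatrixChain

theorem Fin.sum_ite_val_eq {M : Type*} [AddCommMonoid M] {n : ℕ} (f : Fin n → M) (j : ℕ) :
    ∑ l : Fin n, (if (l : ℕ) = j then f l else 0) = if h : j < n then f ⟨j, h⟩ else 0 := by
  split_ifs with h
  · simp [← Fin.ext_iff (b := ⟨j, h⟩)]
  · exact Finset.sum_eq_zero fun l _ => if_neg (by omega)

section BlochSequence

variable {n m : ℕ}

def block {R : Type*} [Zero R] (u : Fin n × Fin m → R) (j : ℕ) : Fin m → R :=
  fun a => if h : j < n then u (⟨j, h⟩, a) else 0

theorem block_of_lt {R : Type*} [Zero R] (u : Fin n × Fin m → R) {j : ℕ} (h : j < n) :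
    block u j = fun a => u (⟨j, h⟩, a) := by
  funext a
  exact dif_pos h

theorem block_of_le {R : Type*} [Zero R] (u : Fin n × Fin m → R) {j : ℕ} (h : n ≤ j) :
    block u j = 0 := by
  funext a
  simp [block, not_lt.mpr h]

/-- In the paper's 1-based indexing, `blochSeq u z j` is `u_j` for `1 ≤ j ≤ n`, extended to
`j = 0` and `j = n + 1` by the Bloch condition `u_{j+n} = z u_j`. -/
def blochSeq {K : Type*} [DivisionRing K] (u : Fin n × Fin m → K) (z : K) (j : ℕ) : Fin m → K :=
  if j = 0 then z⁻¹ • block u (n - 1) else if j = n + 1 then z • block u 0 else block u (j - 1)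

variable {K : Type*} [DivisionRing K] (u : Fin n × Fin m → K) (z : K)

theorem blochSeq_zero : blochSeq u z 0 = z⁻¹ • block u (n - 1) := by
  simp [blochSeq]

theorem blochSeq_add_one {j : ℕ} (hj : j < n) : blochSeq u z (j + 1) = block u j := by
  simp [blochSeq, hj.ne]

theorem blochSeq_add_two (j : ℕ) :
    blochSeq u z (j + 2) = if j + 1 = n then z • block u 0 else block u (j + 1) := by
  simp [blochSeq]

theorem blochSeq_of_lt {j : ℕ} (hj : j < n) :
    blochSeq u z j = if j = 0 then z⁻¹ • block u (n - 1) else block u (j - 1) := by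
  rw [blochSeq, if_neg (show j ≠ n + 1 by omega)]

end BlochSequence

section Hamiltonian

variable {n m : ℕ} (A B C : Fin n → Matrix (Fin m) (Fin m) ℂ) (z : ℂ) (u : Fin n × Fin m → ℂ)

theorem Hmat_mulVec_apply (k : Fin n) (a : Fin m) :
    (Hmat A B C z *ᵥ u) (k, a) =
      (A k *ᵥ block u k) a + (B k *ᵥ block u (k + 1)) a
        + (if (k : ℕ) ≠ 0 then (C k *ᵥ block u (k - 1)) a else 0)
        + (if (k : ℕ) = 0 then z⁻¹ * (C k *ᵥ block u (n - 1)) a else 0)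
        + (if (k : ℕ) + 1 = n then z * (B k *ᵥ block u 0) a else 0) := by
  have hk := k.isLt
  have hblock (X : Matrix (Fin m) (Fin m) ℂ) (l : Fin n) :
      ∑ b, X a b * u (l, b) = (X *ᵥ block u l) a := by
    simp [block_of_lt u l.isLt, mulVec, dotProduct]
  have hzero_ext (X : Matrix (Fin m) (Fin m) ℂ) (j : ℕ) :
      (if j < n then (X *ᵥ block u j) a else 0) = (X *ᵥ block u j) a := by
    split_ifs with h
    · rfl
    · simp [block_of_le u (not_lt.mp h)]
  have hdiag (l : Fin n) : (k : ℕ) = l ↔ (l : ℕ) = k := eq_comm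
  have hsuper (l : Fin n) : (k : ℕ) + 1 = l ↔ (l : ℕ) = k + 1 := eq_comm
  have hsub (l : Fin n) : (l : ℕ) + 1 = k ↔ (k : ℕ) ≠ 0 ∧ (l : ℕ) = k - 1 := by omega
  have hlast : (k : ℕ) = n - 1 ↔ (k : ℕ) + 1 = n := by omega
  rw [mulVec, dotProduct, Fintype.sum_prod_type]
  simp only [Hmat, add_mul, ite_mul, zero_mul, Finset.sum_add_distrib, Finset.sum_ite_irrel,
    Finset.sum_const_zero, mul_assoc, ← Finset.mul_sum, hblock, Fin.ext_iff, hdiag, hsuper, hsub,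
    ite_and, Fin.sum_ite_val_eq, dite_eq_ite, hzero_ext, hk, Nat.zero_lt_of_lt hk,
    Nat.sub_one_lt_of_lt hk, if_true, hlast]

theorem Hmat_mulVec_apply_eq_blochSeq (k : Fin n) (a : Fin m) :
    (Hmat A B C z *ᵥ u) (k, a) =
      (A k *ᵥ blochSeq u z (k + 1) + B k *ᵥ blochSeq u z (k + 2) + C k *ᵥ blochSeq u z k) a := by
  rw [Hmat_mulVec_apply, blochSeq_add_one u z k.isLt, blochSeq_add_two, blochSeq_of_lt u z k.isLt]
  split_ifs with h0 h1 <;> simp_all [mulVec_smul, block_of_le] <;> ring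

end Hamiltonian

theorem blochSeq_recurrence {n m : ℕ} {A B C : Fin n → Matrix (Fin m) (Fin m) ℂ} {z E : ℂ}
    {u : Fin n × Fin m → ℂ} (huH : Hmat A B C z *ᵥ u = E • u) (k : Fin n) :
    A k *ᵥ blochSeq u z (k + 1) + B k *ᵥ blochSeq u z (k + 2) + C k *ᵥ blochSeq u z k
      = E • blochSeq u z (k + 1) := by
  funext a
  rw [← Hmat_mulVec_apply_eq_blochSeq, huH, blochSeq_add_one u z k.isLt, block_of_lt u k.isLt]
  rfl

theorem stmt0 {n m : ℕ} (hn : 2 ≤ n)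
    (A B C : Fin n → Matrix (Fin m) (Fin m) ℂ)
    (hB : ∀ k, IsUnit (B k))
    (z : ℂ) (hz : z ≠ 0) (E : ℂ)
    (u : Fin n × Fin m → ℂ) (hu : u ≠ 0)
    (huH : Hmat A B C z *ᵥ u = E • u) :
    ∃ w : Fin m ⊕ Fin m → ℂ,
      w = Sum.elim (fun a => u (⟨0, by omega⟩, a)) (fun a => z⁻¹ * u (⟨n - 1, by omega⟩, a)) ∧
      w ≠ 0 ∧ transfer A B C E *ᵥ w = z • w := by
  set v := blochSeq u z
  let s (j : ℕ) : Fin m ⊕ Fin m → ℂ := Sum.elim (v (j + 1)) (v j)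
  have hstep (k : Fin n) : tstep (A k) (B k) (C k) E *ᵥ s k = s (k + 1) :=
    tstep_mulVec_eq (hB k) (blochSeq_recurrence huH k)
  have hv0 : v 0 = z⁻¹ • block u (n - 1) := blochSeq_zero u z
  have hv1 : v 1 = block u 0 := blochSeq_add_one u z (by omega)
  have hvn : v n = block u (n - 1) := by
    simpa [Nat.sub_add_cancel (by omega : 1 ≤ n)] using blochSeq_add_one u z (by omega : n - 1 < n)
  have hvn1 : v (n + 1) = z • block u 0 := by
    have h := blochSeq_add_two u z (n - 1)
    rwa [if_pos (by omega), show n - 1 + 2 = n + 1 by omega] at h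
  refine ⟨s 0, ?_, ?_, ?_⟩
  · change Sum.elim (v 1) (v 0) = _
    rw [hv0, hv1, block_of_lt u (by omega : 0 < n), block_of_lt u (by omega : n - 1 < n)]
    rfl
  · intro h0
    apply hu
    funext ⟨k, a⟩
    have hsk := congrFun (eq_zero_of_mulVec_eq_succ _ s hstep h0 k k.isLt.le) (Sum.inl a)
    simpa [s, v, blochSeq_add_one u z k.isLt, block_of_lt u k.isLt] using hsk
  · rw [transfer, List.prod_reverse_ofFn_mulVec _ s hstep]
    funext x
    cases x <;> simp [s, hv0, hv1, hvn, hvn1, hz]
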